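/- arXiv:1802.06332 — 4 statements merged into one kernel-verified Lean document; each statement's English description precedes it below -/
import Mathlib

section
/- For every integer N ≥ 4, (1/(N(N−1)(N−2)(N−3))) · Σ |i − j| · |k − l| = (N+1)(5N+4)/45, where the sum is over all ordered quadruples of pairwise distinct integers i, j, k, l in {1,...,N}. Equivalently, if (R_1, R_2, R_3, R_4) are four distinct ranks drawn uniformly without replacement from {1,...,N}, then E[|R_1 − R_2| · |R_3 − R_4|] = (N+1)(5N+4)/45. -/
open Finset

private lemma sum_quartic (n : ℕ) (a b c d e : ℝ) :
    ∑ l ∈ Finset.Icc 1 n, (a*(l:ℝ)^4 + b*(l:ℝ)^3 + c*(l:ℝ)^2 + d*(l:ℝ) + e)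
      = a*((n:ℝ)*(n+1)*(2*n+1)*(3*(n:ℝ)^2+3*n-1)/30) + b*(((n:ℝ)*(n+1)/2)^2)
        + c*((n:ℝ)*(n+1)*(2*n+1)/6) + d*((n:ℝ)*(n+1)/2) + e*n := by
  induction n with
  | zero => simp
  | succ n ih =>
      rw [Finset.sum_Icc_succ_top (by omega)]
      push_cast at ih ⊢
      linear_combination ih

private lemma sumP1 (n : ℕ) : ∑ l ∈ Finset.Icc 1 n, (l:ℝ) = (n:ℝ)*((n:ℝ)+1)/2 := by
  induction n with
  | zero => simp
  | succ n ih =>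
      rw [Finset.sum_Icc_succ_top (by omega)]
      push_cast at ih ⊢
      linear_combination ih

private lemma gval (N i : ℕ) (h1 : 1 ≤ i) (h2 : i ≤ N) :
    ∑ l ∈ Finset.Icc 1 N, |(i:ℝ) - (l:ℝ)| = (i:ℝ)^2 - (i:ℝ)*((N:ℝ)+1) + (N:ℝ)*((N:ℝ)+1)/2 := by
  have hIcc : ∀ m : ℕ, Finset.Icc 1 m = Finset.Ioc 0 m := by
    intro m; ext x; simp; omega
  have hsplit : (∑ l ∈ Finset.Ioc 0 i, |(i:ℝ) - (l:ℝ)|) + ∑ l ∈ Finset.Ioc i N, |(i:ℝ) - (l:ℝ)|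
      = ∑ l ∈ Finset.Ioc 0 N, |(i:ℝ) - (l:ℝ)| :=
    Finset.sum_Ioc_consecutive _ (by omega) h2
  have e1 : ∑ l ∈ Finset.Ioc 0 i, |(i:ℝ) - (l:ℝ)| = (i:ℝ)^2 - (i:ℝ)*((i:ℝ)+1)/2 := by
    have hc : ∀ l ∈ Finset.Ioc 0 i, |(i:ℝ) - (l:ℝ)| = (i:ℝ) - (l:ℝ) := by
      intro l hl
      rw [Finset.mem_Ioc] at hl
      exact abs_of_nonneg (by have : (l:ℝ) ≤ i := Nat.cast_le.mpr hl.2; linarith)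
    rw [Finset.sum_congr rfl hc, Finset.sum_sub_distrib, Finset.sum_const, ← hIcc, sumP1]
    have : (Finset.Icc 1 i).card = i := by rw [Nat.card_Icc]; omega
    rw [this, nsmul_eq_mul]
    ring
  have e2 : ∑ l ∈ Finset.Ioc i N, |(i:ℝ) - (l:ℝ)|
      = ((N:ℝ)*((N:ℝ)+1)/2 - (i:ℝ)*((i:ℝ)+1)/2) - ((N:ℝ) - (i:ℝ))*(i:ℝ) := by
    have hc : ∀ l ∈ Finset.Ioc i N, |(i:ℝ) - (l:ℝ)| = (l:ℝ) - (i:ℝ) := by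
      intro l hl
      rw [Finset.mem_Ioc] at hl
      rw [abs_sub_comm]
      exact abs_of_nonneg (by have : (i:ℝ) ≤ l := Nat.cast_le.mpr (le_of_lt hl.1); linarith)
    have hId : (∑ l ∈ Finset.Ioc 0 i, (l:ℝ)) + ∑ l ∈ Finset.Ioc i N, (l:ℝ)
        = ∑ l ∈ Finset.Ioc 0 N, (l:ℝ) := Finset.sum_Ioc_consecutive _ (by omega) h2
    rw [← hIcc, sumP1] at hId
    rw [← hIcc, sumP1] at hId
    have hcard : ((Finset.Ioc i N).card : ℝ) = (N:ℝ) - (i:ℝ) := by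
      rw [Nat.card_Ioc]; push_cast [Nat.cast_sub h2]; ring
    rw [Finset.sum_congr rfl hc, Finset.sum_sub_distrib, Finset.sum_const, nsmul_eq_mul, hcard]
    linarith
  rw [hIcc, ← hsplit, e1, e2]
  ring

private noncomputable def gg (N k : ℕ) : ℝ := ∑ l ∈ Finset.Icc 1 N, |(k:ℝ) - (l:ℝ)|

/-- For every integer `N ≥ 4`,
`(1/(N(N-1)(N-2)(N-3))) Σ |i-j||k-l| = (N+1)(5N+4)/45`,
the sum over ordered quadruples of pairwise distinct integers in `{1,…,N}`. -/
theorem stmt9 (N : ℕ) (hN : 4 ≤ N) :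
    (1 / ((N : ℝ) * ((N : ℝ) - 1) * ((N : ℝ) - 2) * ((N : ℝ) - 3))) *
        ∑ i ∈ Finset.Icc 1 N, ∑ j ∈ (Finset.Icc 1 N).erase i,
          ∑ k ∈ ((Finset.Icc 1 N).erase i).erase j,
            ∑ l ∈ (((Finset.Icc 1 N).erase i).erase j).erase k,
              |(i : ℝ) - (j : ℝ)| * |(k : ℝ) - (l : ℝ)|
      = ((N : ℝ) + 1) * (5 * (N : ℝ) + 4) / 45 := by
  have hNR : (4:ℝ) ≤ (N:ℝ) := by exact_mod_cast hN
  set S := Finset.Icc 1 N with hS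
  set G : ℝ := ∑ k ∈ S, gg N k with hG
  have habs : ∀ m k : ℕ, ∑ x ∈ S, |(x:ℝ) - (m:ℝ)| = gg N m := by
    intro m k
    rw [hS, gg]
    exact Finset.sum_congr rfl fun x _ => abs_sub_comm _ _
  have step1 : ∀ i ∈ S, ∀ j ∈ S.erase i,
      (∑ k ∈ (S.erase i).erase j, ∑ l ∈ ((S.erase i).erase j).erase k,
        |(i : ℝ) - (j : ℝ)| * |(k : ℝ) - (l : ℝ)|)
      = |(i:ℝ)-(j:ℝ)| * G - 2* |(i:ℝ)-(j:ℝ)| *(gg N i) - 2* |(i:ℝ)-(j:ℝ)| *(gg N j)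
          + 2* |(i:ℝ)-(j:ℝ)|^2 := by
    intro i hi j hj
    have hl : ∀ k : ℕ, (∑ l ∈ ((S.erase i).erase j).erase k,
        |(i : ℝ) - (j : ℝ)| * |(k : ℝ) - (l : ℝ)|)
        = |(i:ℝ)-(j:ℝ)| * gg N k - |(i:ℝ)-(j:ℝ)| * |(k:ℝ)-(i:ℝ)|
            - |(i:ℝ)-(j:ℝ)| * |(k:ℝ)-(j:ℝ)| := by
      intro k
      rw [Finset.sum_erase _ (by simp), Finset.sum_erase_eq_sub hj,
        Finset.sum_erase_eq_sub hi, ← Finset.mul_sum]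
      rw [hS, gg]
    rw [Finset.sum_congr rfl (fun k _ => hl k), Finset.sum_erase_eq_sub hj,
      Finset.sum_erase_eq_sub hi]
    simp only [sub_self, abs_zero, mul_zero, sub_zero]
    rw [Finset.sum_sub_distrib, Finset.sum_sub_distrib, ← Finset.mul_sum, ← Finset.mul_sum,
      ← Finset.mul_sum, habs i i, habs j j, ← hG,
      show |(j:ℝ) - (i:ℝ)| = |(i:ℝ)-(j:ℝ)| from abs_sub_comm _ _]
    ring
  have ext : ∀ i ∈ S,
      (∑ j ∈ S.erase i, (|(i:ℝ)-(j:ℝ)| * G - 2* |(i:ℝ)-(j:ℝ)| *(gg N i)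
        - 2* |(i:ℝ)-(j:ℝ)| *(gg N j) + 2* |(i:ℝ)-(j:ℝ)|^2))
      = ∑ j ∈ S, (|(i:ℝ)-(j:ℝ)| * G - 2* |(i:ℝ)-(j:ℝ)| *(gg N i)
        - 2* |(i:ℝ)-(j:ℝ)| *(gg N j) + 2* |(i:ℝ)-(j:ℝ)|^2) := by
    intro i hi
    exact Finset.sum_erase _ (by simp)
  have E3 : ∑ i ∈ S, ∑ j ∈ S, |(i:ℝ)-(j:ℝ)| * gg N j = ∑ j ∈ S, (gg N j)^2 := by
    rw [Finset.sum_comm]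
    refine Finset.sum_congr rfl fun j hj => ?_
    rw [← Finset.sum_mul, habs j j]
    ring
  have inner : ∀ i ∈ S,
      (∑ j ∈ S, (|(i:ℝ)-(j:ℝ)| * G - 2* |(i:ℝ)-(j:ℝ)| *(gg N i)
        - 2* |(i:ℝ)-(j:ℝ)| *(gg N j) + 2* |(i:ℝ)-(j:ℝ)|^2))
      = gg N i * G - 2*(gg N i)^2 - 2*(∑ j ∈ S, |(i:ℝ)-(j:ℝ)| * gg N j)
          + 2*(∑ j ∈ S, ((i:ℝ)-(j:ℝ))^2) := by
    intro i hi
    have hgsum : ∑ j ∈ S, |(i:ℝ)-(j:ℝ)| = gg N i := by rw [hS, gg]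
    rw [Finset.sum_add_distrib, Finset.sum_sub_distrib, Finset.sum_sub_distrib,
      ← Finset.sum_mul, hgsum]
    have p2 : ∑ j ∈ S, 2* |(i:ℝ)-(j:ℝ)| *(gg N i) = 2*(gg N i)^2 := by
      rw [← Finset.sum_mul, ← Finset.mul_sum, hgsum]; ring
    have p3 : ∑ j ∈ S, 2* |(i:ℝ)-(j:ℝ)| *(gg N j)
        = 2*(∑ j ∈ S, |(i:ℝ)-(j:ℝ)| * gg N j) := by
      rw [Finset.mul_sum]
      exact Finset.sum_congr rfl fun j _ => by ring
    have p4 : ∑ j ∈ S, 2* |(i:ℝ)-(j:ℝ)|^2 = 2*(∑ j ∈ S, ((i:ℝ)-(j:ℝ))^2) := by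
      rw [Finset.mul_sum]
      exact Finset.sum_congr rfl fun j _ => by rw [sq_abs]
    rw [p2, p3, p4]
  have key : (∑ i ∈ S, ∑ j ∈ S.erase i, ∑ k ∈ (S.erase i).erase j,
      ∑ l ∈ ((S.erase i).erase j).erase k,
        |(i : ℝ) - (j : ℝ)| * |(k : ℝ) - (l : ℝ)|)
      = G^2 - 4 * (∑ i ∈ S, (gg N i)^2) + 2 * (∑ i ∈ S, ∑ j ∈ S, ((i:ℝ)-(j:ℝ))^2) := by
    rw [Finset.sum_congr rfl fun i hi =>
      (Finset.sum_congr rfl fun j hj => step1 i hi j hj).trans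
        ((ext i hi).trans (inner i hi))]
    rw [Finset.sum_add_distrib, Finset.sum_sub_distrib, Finset.sum_sub_distrib,
      ← Finset.sum_mul, ← hG]
    have q2 : ∑ i ∈ S, 2*(gg N i)^2 = 2 * ∑ i ∈ S, (gg N i)^2 := by
      rw [Finset.mul_sum]
    have q3 : ∑ i ∈ S, 2*(∑ j ∈ S, |(i:ℝ)-(j:ℝ)| * gg N j)
        = 2 * ∑ i ∈ S, ∑ j ∈ S, |(i:ℝ)-(j:ℝ)| * gg N j := by
      rw [Finset.mul_sum]
    have q4 : ∑ i ∈ S, 2*(∑ j ∈ S, ((i:ℝ)-(j:ℝ))^2)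
        = 2 * ∑ i ∈ S, ∑ j ∈ S, ((i:ℝ)-(j:ℝ))^2 := by
      rw [Finset.mul_sum]
    rw [q2, q3, q4, E3]
    ring
  -- numeric evaluation
  have hgg : ∀ i ∈ S, gg N i = (i:ℝ)^2 - (i:ℝ)*((N:ℝ)+1) + (N:ℝ)*((N:ℝ)+1)/2 := by
    intro i hi
    rw [hS, Finset.mem_Icc] at hi
    exact gval N i hi.1 hi.2
  have hGval : G = 1*((N:ℝ)*((N:ℝ)+1)*(2*(N:ℝ)+1)/6) + (-((N:ℝ)+1))*((N:ℝ)*((N:ℝ)+1)/2)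
      + ((N:ℝ)*((N:ℝ)+1)/2)*(N:ℝ) := by
    have r1 : ∑ i ∈ S, gg N i
        = ∑ i ∈ Finset.Icc 1 N, (0*(i:ℝ)^4 + 0*(i:ℝ)^3 + 1*(i:ℝ)^2
            + (-((N:ℝ)+1))*(i:ℝ) + (N:ℝ)*((N:ℝ)+1)/2) :=
      Finset.sum_congr hS (fun i hi => by rw [hgg i (hS ▸ hi)]; ring)
    rw [hG, r1, sum_quartic]
    ring
  have hGG2 : ∑ i ∈ S, (gg N i)^2
      = 1*((N:ℝ)*((N:ℝ)+1)*(2*(N:ℝ)+1)*(3*(N:ℝ)^2+3*(N:ℝ)-1)/30)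
        + (-2*((N:ℝ)+1))*(((N:ℝ)*((N:ℝ)+1)/2)^2)
        + (((N:ℝ)+1)^2 + (N:ℝ)*((N:ℝ)+1))*((N:ℝ)*((N:ℝ)+1)*(2*(N:ℝ)+1)/6)
        + (-((N:ℝ)*((N:ℝ)+1)*((N:ℝ)+1)))*((N:ℝ)*((N:ℝ)+1)/2)
        + (((N:ℝ)*((N:ℝ)+1)/2)^2)*(N:ℝ) := by
    have r1 : ∑ i ∈ S, (gg N i)^2
        = ∑ i ∈ Finset.Icc 1 N, (1*(i:ℝ)^4 + (-2*((N:ℝ)+1))*(i:ℝ)^3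
            + (((N:ℝ)+1)^2 + (N:ℝ)*((N:ℝ)+1))*(i:ℝ)^2
            + (-((N:ℝ)*((N:ℝ)+1)*((N:ℝ)+1)))*(i:ℝ) + ((N:ℝ)*((N:ℝ)+1)/2)^2) :=
      Finset.sum_congr hS (fun i hi => by rw [hgg i (hS ▸ hi)]; ring)
    rw [r1, sum_quartic]
  have hD : ∑ i ∈ S, ∑ j ∈ S, ((i:ℝ)-(j:ℝ))^2
      = (N:ℝ)*((N:ℝ)*((N:ℝ)+1)*(2*(N:ℝ)+1)/6) + (-((N:ℝ)*((N:ℝ)+1)))*((N:ℝ)*((N:ℝ)+1)/2)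
        + ((N:ℝ)*((N:ℝ)+1)*(2*(N:ℝ)+1)/6)*(N:ℝ) := by
    have hin : ∀ i : ℕ, ∑ j ∈ S, ((i:ℝ)-(j:ℝ))^2
        = (N:ℝ)*(i:ℝ)^2 + (-((N:ℝ)*((N:ℝ)+1)))*(i:ℝ) + (N:ℝ)*((N:ℝ)+1)*(2*(N:ℝ)+1)/6 := by
      intro i
      have r1 : ∑ j ∈ S, ((i:ℝ)-(j:ℝ))^2
          = ∑ j ∈ Finset.Icc 1 N, (0*(j:ℝ)^4 + 0*(j:ℝ)^3 + 1*(j:ℝ)^2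
              + (-2*(i:ℝ))*(j:ℝ) + (i:ℝ)^2) :=
        Finset.sum_congr hS (fun j _ => by ring)
      rw [r1, sum_quartic]
      ring
    have r2 : ∑ i ∈ S, ∑ j ∈ S, ((i:ℝ)-(j:ℝ))^2
        = ∑ i ∈ Finset.Icc 1 N, (0*(i:ℝ)^4 + 0*(i:ℝ)^3 + (N:ℝ)*(i:ℝ)^2
            + (-((N:ℝ)*((N:ℝ)+1)))*(i:ℝ) + (N:ℝ)*((N:ℝ)+1)*(2*(N:ℝ)+1)/6) :=
      Finset.sum_congr hS (fun i _ => by rw [hin i]; ring)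
    rw [r2, sum_quartic]
    ring
  rw [key, hGG2, hD, hGval]
  have h0 : (N:ℝ) ≠ 0 := by linarith
  have h1 : (N:ℝ) - 1 ≠ 0 := by intro h; nlinarith
  have h2 : (N:ℝ) - 2 ≠ 0 := by intro h; nlinarith
  have h3 : (N:ℝ) - 3 ≠ 0 := by intro h; nlinarith
  field_simp
  ring
end

section
/- Let X_1,...,X_N be i.i.d. random variables with continuous distribution function F, N ≥ 2, and let R_i = N·H_N(X_i) be the natural rank of X_i in the combined sample, where H_N is the empirical distribution function of X_1,...,X_N. Then almost surely, E[ |R_1 − R_2| | X_1, X_2 ] = (N−2)·|F(X_1) − F(X_2)| + 1. -/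
open MeasureTheory ProbabilityTheory Filter

lemma cdf_Ioc {ν : Measure ℝ} [IsProbabilityMeasure ν] {F : ℝ → ℝ}
    (hF : ∀ x, (ν (Set.Iic x)).toReal = F x) {a b : ℝ} (hab : a ≤ b) :
    (ν (Set.Ioc a b)).toReal = F b - F a := by
  rw [← Set.Iic_sdiff_Iic,
    measure_diff (Set.Iic_subset_Iic.mpr hab) measurableSet_Iic.nullMeasurableSet
      (measure_ne_top ν _),
    ENNReal.toReal_sub_of_le (measure_mono (Set.Iic_subset_Iic.mpr hab)) (measure_ne_top ν _),
    hF, hF]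

lemma noatom_of_cdf {ν : Measure ℝ} [IsProbabilityMeasure ν] {F : ℝ → ℝ}
    (hFcont : Continuous F) (hF : ∀ x, (ν (Set.Iic x)).toReal = F x) (x : ℝ) :
    ν {x} = 0 := by
  have hle : ∀ n : ℕ, (ν {x}).toReal ≤ F x - F (x - 1/(n+1)) := by
    intro n
    have h1 : x - 1/((n:ℝ)+1) ≤ x := by
      have : (0:ℝ) < 1/((n:ℝ)+1) := by positivity
      linarith
    rw [← cdf_Ioc hF h1]
    refine ENNReal.toReal_mono (measure_ne_top _ _) (measure_mono ?_)
    intro y hy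
    simp only [Set.mem_singleton_iff] at hy
    subst hy
    constructor
    · have : (0:ℝ) < 1/((n:ℝ)+1) := by positivity
      linarith
    · exact le_rfl
  have htend : Tendsto (fun n : ℕ => F x - F (x - 1/(n+1))) atTop (nhds 0) := by
    have h1 : Tendsto (fun n : ℕ => x - 1/((n:ℝ)+1)) atTop (nhds x) := by
      have h2 : Tendsto (fun n : ℕ => 1/((n:ℝ)+1)) atTop (nhds 0) :=
        tendsto_one_div_add_atTop_nhds_zero_nat
      simpa using tendsto_const_nhds.sub h2
    have h3 := (hFcont.tendsto x).comp h1
    have := tendsto_const_nhds (x := F x) (f := atTop (α := ℕ)) |>.sub h3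
    simpa using this
  have h0 : (ν {x}).toReal ≤ 0 := ge_of_tendsto htend (Eventually.of_forall hle)
  have := le_antisymm h0 ENNReal.toReal_nonneg
  rcases (ENNReal.toReal_eq_zero_iff _).mp this with h | h
  · exact h
  · exact absurd h (measure_ne_top _ _)

lemma diag_null {Ω : Type*} [MeasurableSpace Ω] {P : Measure Ω} [IsProbabilityMeasure P]
    {X Y : Ω → ℝ} (hX : Measurable X) (hY : Measurable Y) (hind : IndepFun X Y P)
    (hY0 : ∀ x, P.map Y {x} = 0) :
    P {ω | X ω = Y ω} = 0 := by
  have hmap := (indepFun_iff_map_prod_eq_prod_map_map hX.aemeasurable hY.aemeasurable).mp hind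
  have hdm : MeasurableSet {p : ℝ × ℝ | p.1 = p.2} :=
    measurableSet_eq_fun measurable_fst measurable_snd
  have hset : {ω | X ω = Y ω} = (fun ω => (X ω, Y ω)) ⁻¹' {p : ℝ × ℝ | p.1 = p.2} := rfl
  rw [hset, ← Measure.map_apply (hX.prodMk hY) hdm, hmap, Measure.prod_apply hdm]
  have h : ∀ x : ℝ, (P.map Y) (Prod.mk x ⁻¹' {p : ℝ × ℝ | p.1 = p.2}) = 0 := by
    intro x
    have : (Prod.mk x ⁻¹' {p : ℝ × ℝ | p.1 = p.2}) = {x} := by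
      ext y; simp [eq_comm]
    rw [this]; exact hY0 x
  simp [hY0]

lemma rank_abs_eq {N : ℕ} (x : Fin N → ℝ) (i₁ i₂ : Fin N) (hi : i₁ ≠ i₂)
    (hab : x i₂ < x i₁) :
    |(∑ j, if x j ≤ x i₁ then (1:ℝ) else 0) - (∑ j, if x j ≤ x i₂ then (1:ℝ) else 0)|
      = 1 + ∑ j ∈ Finset.univ \ {i₁, i₂},
          (if min (x i₁) (x i₂) < x j ∧ x j ≤ max (x i₁) (x i₂) then (1:ℝ) else 0) := by
  classical
  have hmin : min (x i₁) (x i₂) = x i₂ := min_eq_right hab.le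
  have hmax : max (x i₁) (x i₂) = x i₁ := max_eq_left hab.le
  have hsplit : (∑ j, if x j ≤ x i₁ then (1:ℝ) else 0) - (∑ j, if x j ≤ x i₂ then (1:ℝ) else 0)
      = ∑ j, ((if x j ≤ x i₁ then (1:ℝ) else 0) - (if x j ≤ x i₂ then (1:ℝ) else 0)) := by
    rw [Finset.sum_sub_distrib]
  have hpair : ∑ j ∈ ({i₁, i₂} : Finset (Fin N)),
      ((if x j ≤ x i₁ then (1:ℝ) else 0) - (if x j ≤ x i₂ then (1:ℝ) else 0)) = 1 := by
    rw [Finset.sum_pair hi]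
    rw [if_pos le_rfl, if_pos le_rfl, if_neg (not_le.mpr hab), if_pos hab.le]
    ring
  have hterm : ∀ j ∈ Finset.univ \ ({i₁, i₂} : Finset (Fin N)),
      ((if x j ≤ x i₁ then (1:ℝ) else 0) - (if x j ≤ x i₂ then (1:ℝ) else 0))
        = (if min (x i₁) (x i₂) < x j ∧ x j ≤ max (x i₁) (x i₂) then (1:ℝ) else 0) := by
    intro j _
    rw [hmin, hmax]
    by_cases h1 : x j ≤ x i₂
    · rw [if_pos (h1.trans hab.le), if_pos h1, if_neg (by rintro ⟨h2, -⟩; exact absurd h1 (not_le.mpr h2))]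
      ring
    · by_cases h2 : x j ≤ x i₁
      · rw [if_pos h2, if_neg h1, if_pos ⟨not_le.mp h1, h2⟩]; ring
      · rw [if_neg h2, if_neg h1, if_neg (by rintro ⟨-, h3⟩; exact h2 h3)]
        ring
  have htot : (∑ j, if x j ≤ x i₁ then (1:ℝ) else 0) - (∑ j, if x j ≤ x i₂ then (1:ℝ) else 0)
      = (∑ j ∈ Finset.univ \ ({i₁, i₂} : Finset (Fin N)),
          (if min (x i₁) (x i₂) < x j ∧ x j ≤ max (x i₁) (x i₂) then (1:ℝ) else 0)) + 1 := by
    rw [hsplit, ← Finset.sum_sdiff (Finset.subset_univ ({i₁, i₂} : Finset (Fin N))), hpair,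
      Finset.sum_congr rfl hterm]
  rw [htot]
  have hnn : 0 ≤ ∑ j ∈ Finset.univ \ ({i₁, i₂} : Finset (Fin N)),
      (if min (x i₁) (x i₂) < x j ∧ x j ≤ max (x i₁) (x i₂) then (1:ℝ) else 0) :=
    Finset.sum_nonneg fun j _ => by positivity
  rw [abs_of_nonneg (by linarith)]
  ring

/-- Let `X 0, …, X (N-1)` be i.i.d. with continuous cdf `F` and
let `R i ω = N · H_N(X i ω) = #{j : X j ω ≤ X i ω}` be the natural rank of `X i`.
Then, almost surely,
`E[|R₁ - R₂| ∣ X₁, X₂] = (N-2)|F(X₁) - F(X₂)| + 1`. -/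
theorem stmt12
    {Ω : Type*} [MeasurableSpace Ω] (P : Measure Ω) [IsProbabilityMeasure P]
    (N : ℕ) (hN : 2 ≤ N)
    (X : Fin N → Ω → ℝ) (hmeas : ∀ i, Measurable (X i))
    (hIndep : iIndepFun X P)
    (F : ℝ → ℝ) (hFcont : Continuous F)
    (hF : ∀ i x, (P {ω | X i ω ≤ x}).toReal = F x)
    (i₁ i₂ : Fin N) (hi : i₁ ≠ i₂)
    (R : Fin N → Ω → ℝ)
    (hR : ∀ i ω, R i ω = ∑ j, if X j ω ≤ X i ω then (1:ℝ) else 0) :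
    P[(fun ω => |R i₁ ω - R i₂ ω|) |
        MeasurableSpace.comap (fun ω => (X i₁ ω, X i₂ ω)) inferInstance]
      =ᵐ[P] fun ω => ((N : ℝ) - 2) * |F (X i₁ ω) - F (X i₂ ω)| + 1 := by
  classical
  set T : Ω → ℝ × ℝ := fun ω => (X i₁ ω, X i₂ ω) with hTdef
  have hT : Measurable T := (hmeas i₁).prodMk (hmeas i₂)
  have hm : MeasurableSpace.comap T inferInstance ≤ ‹MeasurableSpace Ω› := hT.comap_le
  haveI : SigmaFinite (P.trim hm) := (isFiniteMeasure_trim hm).toSigmaFinite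
  -- laws
  haveI hprob : ∀ j : Fin N, IsProbabilityMeasure (P.map (X j)) :=
    fun j => Measure.isProbabilityMeasure_map (hmeas j).aemeasurable
  have hcdf : ∀ j x, ((P.map (X j)) (Set.Iic x)).toReal = F x := by
    intro j x
    rw [Measure.map_apply (hmeas j) measurableSet_Iic]
    exact hF j x
  have hFmono : Monotone F := by
    intro a b hab
    rw [← hcdf i₁ a, ← hcdf i₁ b]
    exact ENNReal.toReal_mono (measure_ne_top _ _) (measure_mono (Set.Iic_subset_Iic.mpr hab))
  have habs : ∀ a b : ℝ, F (max a b) - F (min a b) = |F a - F b| := by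
    intro a b
    rcases le_total a b with h | h
    · rw [max_eq_right h, min_eq_left h, abs_sub_comm, abs_of_nonneg (by linarith [hFmono h])]
    · rw [max_eq_left h, min_eq_right h, abs_of_nonneg (by linarith [hFmono h])]
  have hdiag : P {ω | X i₁ ω = X i₂ ω} = 0 :=
    diag_null (hmeas i₁) (hmeas i₂) (hIndep.indepFun hi)
      (fun x => noatom_of_cdf hFcont (hcdf i₂) x)
  -- the "in between" indicators
  set J : Finset (Fin N) := Finset.univ \ {i₁, i₂} with hJdef
  have hJcard : (J.card : ℝ) = (N : ℝ) - 2 := by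
    have h2 : ({i₁, i₂} : Finset (Fin N)).card = 2 := by
      rw [Finset.card_insert_of_notMem (by simpa using hi), Finset.card_singleton]
    have h3 : J.card = N - 2 := by
      rw [hJdef, Finset.card_sdiff_of_subset (Finset.subset_univ _), Finset.card_univ, Fintype.card_fin, h2]
    rw [h3, Nat.cast_sub hN]; norm_num
  set B : Fin N → Ω → ℝ := fun j ω =>
    if min (X i₁ ω) (X i₂ ω) < X j ω ∧ X j ω ≤ max (X i₁ ω) (X i₂ ω) then 1 else 0 with hBdef
  have hBmeas : ∀ j, Measurable (B j) := by
    intro j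
    apply Measurable.ite _ measurable_const measurable_const
    exact (measurableSet_lt ((hmeas i₁).min (hmeas i₂)) (hmeas j)).inter
      (measurableSet_le (hmeas j) ((hmeas i₁).max (hmeas i₂)))
  have hBint : ∀ j, Integrable (B j) P := by
    intro j
    refine Integrable.mono' (integrable_const 1) (hBmeas j).aestronglyMeasurable
      (Filter.Eventually.of_forall fun ω => ?_)
    rw [Real.norm_eq_abs]
    simp only [hBdef]
    split <;> norm_num
  -- R facts
  have hRmeas : ∀ i, Measurable (R i) := by
    intro i
    have : R i = fun ω => ∑ j, if X j ω ≤ X i ω then (1:ℝ) else 0 := funext (hR i)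
    rw [this]
    exact Finset.measurable_sum _ fun j _ =>
      Measurable.ite (measurableSet_le (hmeas j) (hmeas i)) measurable_const measurable_const
  have hRnn : ∀ i ω, 0 ≤ R i ω := by
    intro i ω; rw [hR]; exact Finset.sum_nonneg fun j _ => by positivity
  have hRle : ∀ i ω, R i ω ≤ N := by
    intro i ω; rw [hR]
    calc (∑ j, if X j ω ≤ X i ω then (1:ℝ) else 0) ≤ ∑ _j : Fin N, (1:ℝ) :=
          Finset.sum_le_sum fun j _ => by split <;> norm_num
      _ = N := by simp
  have hfmeas : Measurable fun ω => |R i₁ ω - R i₂ ω| := ((hRmeas i₁).sub (hRmeas i₂)).abs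
  have hfint : Integrable (fun ω => |R i₁ ω - R i₂ ω|) P := by
    refine Integrable.mono' (integrable_const (N : ℝ)) hfmeas.aestronglyMeasurable
      (Filter.Eventually.of_forall fun ω => ?_)
    rw [Real.norm_eq_abs, abs_abs]
    exact abs_le.mpr ⟨by linarith [hRnn i₁ ω, hRle i₂ ω], by linarith [hRnn i₂ ω, hRle i₁ ω]⟩
  -- a.e. pointwise identity
  have hae : (fun ω => |R i₁ ω - R i₂ ω|) =ᵐ[P] fun ω => 1 + ∑ j ∈ J, B j ω := by
    have hne : ∀ᵐ ω ∂P, X i₁ ω ≠ X i₂ ω := by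
      rw [ae_iff]; simpa using hdiag
    filter_upwards [hne] with ω hω
    rw [hR, hR]
    rcases lt_or_gt_of_ne hω with h | h
    · have hkey := rank_abs_eq (fun j => X j ω) i₂ i₁ hi.symm h
      rw [abs_sub_comm, hkey, hBdef, hJdef]
      simp only [Finset.pair_comm i₂ i₁, min_comm (X i₂ ω) (X i₁ ω), max_comm (X i₂ ω) (X i₁ ω)]
    · have hkey := rank_abs_eq (fun j => X j ω) i₁ i₂ hi h
      rw [hkey, hBdef, hJdef]
  -- independence: joint law is a product
  have hmap : ∀ j ∈ J, P.map (fun ω => (T ω, X j ω)) = (P.map T).prod (P.map (X j)) := by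
    intro j hj
    rw [hJdef, Finset.mem_sdiff, Finset.mem_insert, Finset.mem_singleton] at hj
    have hj1 : j ≠ i₁ := fun h => hj.2 (Or.inl h)
    have hj2 : j ≠ i₂ := fun h => hj.2 (Or.inr h)
    exact (indepFun_iff_map_prod_eq_prod_map_map hT.aemeasurable (hmeas j).aemeasurable).mp
      (hIndep.indepFun_prodMk hmeas i₁ i₂ j hj1.symm hj2.symm)
  haveI : IsProbabilityMeasure (P.map T) := Measure.isProbabilityMeasure_map hT.aemeasurable
  -- key computation
  have hD : ∀ j ∈ J, ∀ S : Set (ℝ × ℝ), MeasurableSet S →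
      ∫ ω in T ⁻¹' S, B j ω ∂P = ∫ ω in T ⁻¹' S, |F (X i₁ ω) - F (X i₂ ω)| ∂P := by
    intro j hj S hS
    set χ : ℝ × ℝ → ℝ := S.indicator fun _ => 1 with hχdef
    set φ : (ℝ × ℝ) × ℝ → ℝ := fun p =>
      χ p.1 * (if min p.1.1 p.1.2 < p.2 ∧ p.2 ≤ max p.1.1 p.1.2 then 1 else 0) with hφdef
    have hχmeas : Measurable χ := measurable_const.indicator hS
    have hχbd : ∀ t, |χ t| ≤ 1 := by
      intro t; rw [hχdef]; by_cases h : t ∈ S <;> simp [Set.indicator_apply, h]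
    have hφmeas : Measurable φ := by
      apply (hχmeas.comp measurable_fst).mul
      apply Measurable.ite _ measurable_const measurable_const
      exact (measurableSet_lt
          ((measurable_fst.comp measurable_fst).min (measurable_snd.comp measurable_fst))
          measurable_snd).inter
        (measurableSet_le measurable_snd
          ((measurable_fst.comp measurable_fst).max (measurable_snd.comp measurable_fst)))
    have hφbd : ∀ p, ‖φ p‖ ≤ 1 := by
      intro p
      rw [hφdef, Real.norm_eq_abs, abs_mul]
      have h2 : |(if min p.1.1 p.1.2 < p.2 ∧ p.2 ≤ max p.1.1 p.1.2 then (1:ℝ) else 0)| ≤ 1 := by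
        split <;> norm_num
      have := mul_le_mul (hχbd p.1) h2 (abs_nonneg _) zero_le_one
      linarith
    have hstep1 : ∫ ω in T ⁻¹' S, B j ω ∂P = ∫ ω, φ (T ω, X j ω) ∂P := by
      rw [← integral_indicator (hT hS)]
      congr 1; funext ω
      by_cases hω : T ω ∈ S
      · rw [Set.indicator_of_mem (Set.mem_preimage.mpr hω), hφdef, hχdef]
        simp [Set.indicator_of_mem (show (X i₁ ω, X i₂ ω) ∈ S from hω), hBdef, hTdef]
      · rw [Set.indicator_of_notMem (fun h => hω (Set.mem_preimage.mp h)), hφdef, hχdef]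
        simp [Set.indicator_of_notMem (show (X i₁ ω, X i₂ ω) ∉ S from hω), hω]
    have hstep2 : ∫ ω, φ (T ω, X j ω) ∂P = ∫ p, φ p ∂((P.map T).prod (P.map (X j))) := by
      rw [← hmap j hj,
        integral_map (hT.prodMk (hmeas j)).aemeasurable hφmeas.aestronglyMeasurable]
    haveI := hprob j
    have hφint : Integrable φ ((P.map T).prod (P.map (X j))) :=
      Integrable.mono' (integrable_const 1) hφmeas.aestronglyMeasurable
        (Filter.Eventually.of_forall hφbd)
    have hstep3 : ∫ p, φ p ∂((P.map T).prod (P.map (X j)))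
        = ∫ t, ∫ z, φ (t, z) ∂(P.map (X j)) ∂(P.map T) := integral_prod _ hφint
    have hinner : ∀ t : ℝ × ℝ, ∫ z, φ (t, z) ∂(P.map (X j)) = χ t * |F t.1 - F t.2| := by
      intro t
      rw [hφdef]
      simp only
      rw [integral_const_mul]
      congr 1
      have hrw : (fun z => if min t.1 t.2 < z ∧ z ≤ max t.1 t.2 then (1:ℝ) else 0)
          = (Set.Ioc (min t.1 t.2) (max t.1 t.2)).indicator (fun _ => (1:ℝ)) := by
        funext z; rw [Set.indicator_apply]; simp [Set.mem_Ioc]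
      rw [hrw, integral_indicator_const _ measurableSet_Ioc, smul_eq_mul, mul_one, measureReal_def,
        cdf_Ioc (hcdf j) min_le_max, habs]
    have hstep4 : ∫ t, χ t * |F t.1 - F t.2| ∂(P.map T)
        = ∫ ω in T ⁻¹' S, |F (X i₁ ω) - F (X i₂ ω)| ∂P := by
      have hψm : Measurable fun t : ℝ × ℝ => χ t * |F t.1 - F t.2| := by
        exact hχmeas.mul ((hFcont.measurable.comp measurable_fst).sub
          (hFcont.measurable.comp measurable_snd)).abs
      rw [integral_map hT.aemeasurable hψm.aestronglyMeasurable,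
        ← integral_indicator (hT hS)]
      congr 1; funext ω
      by_cases hω : T ω ∈ S
      · rw [Set.indicator_of_mem (Set.mem_preimage.mpr hω), hχdef]
        simp [Set.indicator_of_mem (show (X i₁ ω, X i₂ ω) ∈ S from hω), hTdef]
      · rw [Set.indicator_of_notMem (fun h => hω (Set.mem_preimage.mp h)), hχdef]
        simp [Set.indicator_of_notMem (show (X i₁ ω, X i₂ ω) ∉ S from hω), hω]
    rw [hstep1, hstep2, hstep3]
    simp_rw [hinner]
    exact hstep4
  -- bounds on F
  have hF01 : ∀ x, 0 ≤ F x ∧ F x ≤ 1 := by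
    intro x
    rw [← hF i₁ x]
    refine ⟨ENNReal.toReal_nonneg, ?_⟩
    have := prob_le_one (μ := P) (s := {ω | X i₁ ω ≤ x})
    calc (P {ω | X i₁ ω ≤ x}).toReal ≤ (1 : ENNReal).toReal :=
          ENNReal.toReal_mono (by norm_num) this
      _ = 1 := by norm_num
  have hgmeas : Measurable fun ω => ((N : ℝ) - 2) * |F (X i₁ ω) - F (X i₂ ω)| + 1 :=
    ((measurable_const.mul (((hFcont.measurable.comp (hmeas i₁)).sub
      (hFcont.measurable.comp (hmeas i₂))).abs)).add measurable_const)
  have habsFint : Integrable (fun ω => |F (X i₁ ω) - F (X i₂ ω)|) P := by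
    refine Integrable.mono' (integrable_const 2)
      (((hFcont.measurable.comp (hmeas i₁)).sub
        (hFcont.measurable.comp (hmeas i₂))).abs).aestronglyMeasurable
      (Filter.Eventually.of_forall fun ω => ?_)
    rw [Real.norm_eq_abs, abs_abs]
    have h1 := hF01 (X i₁ ω); have h2 := hF01 (X i₂ ω)
    exact abs_le.mpr ⟨by linarith, by linarith⟩
  have hgint : Integrable (fun ω => ((N : ℝ) - 2) * |F (X i₁ ω) - F (X i₂ ω)| + 1) P :=
    ((habsFint.const_mul _).add (integrable_const 1))
  -- the set-integral identity
  have hg_eq : ∀ s : Set Ω, MeasurableSet[MeasurableSpace.comap T inferInstance] s → P s < ⊤ →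
      ∫ ω in s, (((N : ℝ) - 2) * |F (X i₁ ω) - F (X i₂ ω)| + 1) ∂P
        = ∫ ω in s, |R i₁ ω - R i₂ ω| ∂P := by
    rintro s ⟨S, hS, rfl⟩ -
    have e1 : ∫ ω in T ⁻¹' S, |R i₁ ω - R i₂ ω| ∂P
        = ∫ ω in T ⁻¹' S, (1 + ∑ j ∈ J, B j ω) ∂P :=
      setIntegral_congr_ae (hT hS) (hae.mono fun ω hω _ => hω)
    have e2 : ∫ ω in T ⁻¹' S, (1 + ∑ j ∈ J, B j ω) ∂P
        = (P (T ⁻¹' S)).toReal + ∑ j ∈ J, ∫ ω in T ⁻¹' S, B j ω ∂P := by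
      rw [integral_add (integrableOn_const (C := (1:ℝ)) (measure_ne_top _ _))
        ((integrable_finset_sum J fun j _ => hBint j).integrableOn),
        integral_finset_sum _ (fun j _ => (hBint j).integrableOn)]
      simp [measureReal_def]
    have e3 : ∑ j ∈ J, ∫ ω in T ⁻¹' S, B j ω ∂P
        = ((N : ℝ) - 2) * ∫ ω in T ⁻¹' S, |F (X i₁ ω) - F (X i₂ ω)| ∂P := by
      rw [Finset.sum_congr rfl (fun j hj => hD j hj S hS), Finset.sum_const, nsmul_eq_mul, hJcard]
    have e4 : ∫ ω in T ⁻¹' S, (((N : ℝ) - 2) * |F (X i₁ ω) - F (X i₂ ω)| + 1) ∂P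
        = ((N : ℝ) - 2) * (∫ ω in T ⁻¹' S, |F (X i₁ ω) - F (X i₂ ω)| ∂P)
          + (P (T ⁻¹' S)).toReal := by
      rw [integral_add ((habsFint.const_mul _).integrableOn)
        (integrableOn_const (C := (1:ℝ)) (measure_ne_top _ _)), integral_const_mul]
      simp [measureReal_def]
    rw [e1, e2, e3, e4]
    ring
  have hgm : AEStronglyMeasurable[MeasurableSpace.comap T inferInstance]
      (fun ω => ((N : ℝ) - 2) * |F (X i₁ ω) - F (X i₂ ω)| + 1) P := by
    have hTm : Measurable[MeasurableSpace.comap T inferInstance] T := Measurable.of_comap_le le_rfl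
    have hΦ : Measurable fun p : ℝ × ℝ => ((N : ℝ) - 2) * |F p.1 - F p.2| + 1 :=
      ((measurable_const.mul (((hFcont.measurable.comp measurable_fst).sub
        (hFcont.measurable.comp measurable_snd)).abs)).add measurable_const)
    exact StronglyMeasurable.aestronglyMeasurable (Measurable.stronglyMeasurable (hΦ.comp hTm))
  exact (ae_eq_condExp_of_forall_setIntegral_eq hm hfint
    (fun s _ _ => hgint.integrableOn) hg_eq hgm).symm
end

section
/- Let X_1,...,X_N be i.i.d. random variables with continuous distribution function F, N ≥ 4, and let R_i = N·H_N(X_i) be the natural rank of X_i, where H_N is the empirical distribution function of X_1,...,X_N. Then almost surely, E[ |R_3 − R_4| | X_1, X_2 ] = (N−1)/3 + 2F(X_1)(1 − F(X_1)) + 2F(X_2)(1 − F(X_2)). -/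
open MeasureTheory ProbabilityTheory Set Filter Topology
open scoped ENNReal

set_option linter.unusedSectionVars false
set_option linter.unusedVariables false

section Aux

/-- The freezing lemma: if `T` and `Y` are independent, the conditional expectation of
`f (T, Y)` given `T` is obtained by integrating out `Y` against its law. -/
lemma stmt13_freeze {Ω β γ : Type*} [MeasurableSpace Ω] [mβ : MeasurableSpace β]
    [MeasurableSpace γ] [StandardBorelSpace γ] [Nonempty γ]
    (P : Measure Ω) [IsProbabilityMeasure P] {T : Ω → β} {Y : Ω → γ}
    (hT : Measurable T) (hY : Measurable Y) (hTY : IndepFun T Y P)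
    {f : β × γ → ℝ} (hf : Measurable f) (hfb : ∀ p, ‖f p‖ ≤ 1) :
    P[fun ω => f (T ω, Y ω) | mβ.comap T] =ᵐ[P] fun ω => ∫ y, f (T ω, y) ∂(P.map Y) := by
  have hmap : P.map (fun ω => (T ω, Y ω)) = (P.map T) ⊗ₘ (Kernel.const β (P.map Y)) := by
    rw [Measure.compProd_const,
      ← (indepFun_iff_map_prod_eq_prod_map_map hT.aemeasurable hY.aemeasurable).mp hTY]
  have hcond := condDistrib_ae_eq_of_measure_eq_compProd_of_measurable hT hY hmap
  have hcond' : ∀ᵐ ω ∂P, Kernel.const β (P.map Y) (T ω) = condDistrib Y T P (T ω) :=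
    ae_of_ae_map hT.aemeasurable hcond.symm
  have hint : Integrable (fun ω => f (T ω, Y ω)) P := by
    refine Integrable.mono' (integrable_const 1)
      ((hf.comp (hT.prodMk hY)).aestronglyMeasurable) ?_
    exact Filter.Eventually.of_forall fun ω => hfb _
  refine (condExp_prod_ae_eq_integral_condDistrib hT hY.aemeasurable
    hf.stronglyMeasurable hint).trans ?_
  filter_upwards [hcond'] with ω hω
  rw [← hω, Kernel.const_apply]

variable {F : ℝ → ℝ} {ρ : Measure ℝ} [IsProbabilityMeasure ρ]

section cdf
variable (hFc : Continuous F) (hF0 : ∀ x, 0 ≤ F x)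
  (hρ : ∀ x, ρ (Iic x) = ENNReal.ofReal (F x))

include hρ hF0

lemma stmt13_F_eq (x : ℝ) : F x = (ρ (Iic x)).toReal := by
  rw [hρ, ENNReal.toReal_ofReal (hF0 x)]

lemma stmt13_F_mono : Monotone F := fun x y hxy => by
  rw [stmt13_F_eq hF0 hρ, stmt13_F_eq hF0 hρ]
  exact ENNReal.toReal_mono (measure_ne_top _ _) (measure_mono (Iic_subset_Iic.2 hxy))

lemma stmt13_F_le_one (x : ℝ) : F x ≤ 1 := by
  rw [stmt13_F_eq hF0 hρ]
  exact ENNReal.toReal_le_of_le_ofReal one_pos.le (by simpa using prob_le_one)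

lemma stmt13_Ioc {x y : ℝ} (h : x ≤ y) : ρ (Ioc x y) = ENNReal.ofReal (F y - F x) := by
  have : ρ (Ioc x y) = ρ (Iic y) - ρ (Iic x) := by
    rw [← Iic_sdiff_Iic, measure_diff (Iic_subset_Iic.2 h) nullMeasurableSet_Iic
      (measure_ne_top _ _)]
  rw [this, hρ, hρ, ENNReal.ofReal_sub _ (hF0 x)]

include hFc

lemma stmt13_atom (y : ℝ) : ρ {y} = 0 := by
  have key : ∀ ε : ℝ, 0 < ε → ρ {y} ≤ ENNReal.ofReal ε := by
    intro ε hε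
    obtain ⟨δ, hδ, hδ'⟩ := Metric.continuous_iff.mp hFc y ε hε
    have h1 : ρ {y} ≤ ρ (Ioc (y - δ/2) y) := by
      refine measure_mono (fun z hz => ?_)
      rw [mem_singleton_iff] at hz
      subst hz
      exact ⟨by linarith, le_rfl⟩
    refine h1.trans ?_
    rw [stmt13_Ioc hF0 hρ (by linarith)]
    refine ENNReal.ofReal_le_ofReal ?_
    have h2 := hδ' (y - δ/2) (by rw [Real.dist_eq, abs_of_nonpos (by linarith)]; linarith)
    rw [Real.dist_eq] at h2
    have h3 := abs_lt.mp h2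
    linarith [h3.1]
  refine le_antisymm (ENNReal.le_of_forall_pos_le_add fun ε hε _ => ?_) zero_le
  rw [zero_add]
  have := key ε (by exact_mod_cast hε)
  rwa [ENNReal.ofReal_coe_nnreal] at this

lemma stmt13_Iio (y : ℝ) : ρ (Iio y) = ENNReal.ofReal (F y) := by
  have : ρ (Iic y) = ρ (Iio y) + ρ {y} := by
    rw [← measure_union (by simp) (measurableSet_singleton y), Iio_union_right]
  rw [stmt13_atom hFc hF0 hρ, add_zero] at this
  rw [← this, hρ]

lemma stmt13_Ici (y : ℝ) : ρ (Ici y) = ENNReal.ofReal (1 - F y) := by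
  have h := measure_compl (μ := ρ) (measurableSet_Iio (a := y)) (measure_ne_top _ _)
  rw [compl_Iio] at h
  rw [h, measure_univ, stmt13_Iio hFc hF0 hρ, ← ENNReal.ofReal_one,
    ← ENNReal.ofReal_sub _ (hF0 y)]

lemma stmt13_F_tendsto_atTop : Tendsto F atTop (𝓝 1) := by
  have h := tendsto_measure_Iic_atTop ρ
  rw [measure_univ] at h
  have h2 : Tendsto (fun x => (ρ (Iic x)).toReal) atTop (𝓝 (1:ℝ≥0∞).toReal) :=
    (ENNReal.tendsto_toReal ENNReal.one_ne_top).comp h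
  simpa only [ENNReal.toReal_one, ← stmt13_F_eq hF0 hρ] using h2

lemma stmt13_F_tendsto_atBot : Tendsto F atBot (𝓝 0) := by
  have h := tendsto_measure_Ioc_atBot ρ (0:ℝ)
  have h2 : Tendsto (fun x => (ρ (Ioc x 0)).toReal) atBot (𝓝 (ρ (Iic 0)).toReal) :=
    (ENNReal.tendsto_toReal (measure_ne_top _ _)).comp h
  have h3 : Tendsto (fun x => F 0 - F x) atBot (𝓝 (F 0)) := by
    refine h2.congr' ?_ |>.congr' (EventuallyEq.rfl) |>.mono_right ?_
    · filter_upwards [eventually_le_atBot (0:ℝ)] with x hx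
      rw [stmt13_Ioc hF0 hρ hx, ENNReal.toReal_ofReal
        (by linarith [stmt13_F_mono hF0 hρ hx])]
    · rw [← stmt13_F_eq hF0 hρ]
  have h4 : Tendsto (fun x => F 0 - (F 0 - F x)) atBot (𝓝 (F 0 - F 0)) :=
    tendsto_const_nhds.sub h3
  simpa using h4

lemma stmt13_map_F_eq : ρ.map F = volume.restrict (Icc (0:ℝ) 1) := by
  have hFm : Monotone F := stmt13_F_mono hF0 hρ
  have hF1 : ∀ x, F x ≤ 1 := stmt13_F_le_one hF0 hρ
  have htop : Tendsto F atTop (𝓝 1) := stmt13_F_tendsto_atTop hFc hF0 hρ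
  have hbot : Tendsto F atBot (𝓝 0) := stmt13_F_tendsto_atBot hFc hF0 hρ
  haveI : IsFiniteMeasure (volume.restrict (Icc (0:ℝ) 1)) :=
    ⟨by simp [Real.volume_Icc]⟩
  refine Measure.ext_of_Iic _ _ (fun t => ?_)
  rw [Measure.map_apply hFc.measurable measurableSet_Iic,
    Measure.restrict_apply measurableSet_Iic]
  rcases lt_or_ge t 0 with ht | ht
  · have h1 : F ⁻¹' Iic t = ∅ := by
      ext x; simp only [mem_preimage, mem_Iic, mem_empty_iff_false, iff_false, not_le]
      linarith [hF0 x]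
    have h2 : Iic t ∩ Icc (0:ℝ) 1 = ∅ := by
      ext x; simp only [mem_inter_iff, mem_Iic, mem_Icc, mem_empty_iff_false, iff_false]
      rintro ⟨h, h', _⟩; linarith
    rw [h1, h2]; simp
  rcases le_or_gt 1 t with ht1 | ht1
  · have h1 : F ⁻¹' Iic t = univ := by
      ext x; simp only [mem_preimage, mem_Iic, mem_univ, iff_true]
      linarith [hF1 x]
    have h2 : Iic t ∩ Icc (0:ℝ) 1 = Icc 0 1 := by
      rw [inter_eq_right]; intro x hx; exact hx.2.trans ht1
    rw [h1, h2, measure_univ, Real.volume_Icc]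
    norm_num
  · have h2 : Iic t ∩ Icc (0:ℝ) 1 = Icc 0 t := by
      ext x; simp only [mem_inter_iff, mem_Iic, mem_Icc]
      constructor
      · rintro ⟨h, h', _⟩; exact ⟨h', h⟩
      · rintro ⟨h, h'⟩; exact ⟨h', h, by linarith⟩
    rw [h2, Real.volume_Icc]
    rcases eq_empty_or_nonempty (F ⁻¹' Iic t) with he | hne
    · have ht0 : t = 0 := by
        by_contra h0
        have htpos : 0 < t := lt_of_le_of_ne ht (Ne.symm h0)
        obtain ⟨x, hx⟩ := (hbot.eventually (eventually_lt_nhds htpos)).exists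
        exact absurd (mem_preimage.mpr (mem_Iic.mpr hx.le)) (by simp [he])
      rw [he, ht0]; simp
    · have hbdd : BddAbove (F ⁻¹' Iic t) := by
        obtain ⟨x₀, hx₀⟩ := (htop.eventually (eventually_gt_nhds ht1)).exists
        refine ⟨x₀, fun x hx => ?_⟩
        by_contra hgt
        push_neg at hgt
        exact absurd (hFm hgt.le) (by simp only [mem_preimage, mem_Iic] at hx; linarith)
      have hclosed : IsClosed (F ⁻¹' Iic t) := isClosed_Iic.preimage hFc
      set s := sSup (F ⁻¹' Iic t) with hs
      have hmem : s ∈ F ⁻¹' Iic t := hclosed.csSup_mem hne hbdd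
      have hFs : F s ≤ t := hmem
      have hIic : F ⁻¹' Iic t = Iic s := by
        ext x
        simp only [mem_preimage, mem_Iic]
        constructor
        · intro hx; exact le_csSup hbdd hx
        · intro hx; exact le_trans (hFm hx) hFs
      have hFst : F s = t := by
        refine le_antisymm hFs ?_
        by_contra hlt
        push_neg at hlt
        obtain ⟨x₁, hx₁⟩ := (htop.eventually (eventually_gt_nhds ht1)).exists
        have hsx : s ≤ x₁ := by
          by_contra hgt; push_neg at hgt
          exact absurd (hFm hgt.le) (by linarith)
        obtain ⟨c, hc, hFc'⟩ := intermediate_value_Icc hsx hFc.continuousOn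
          (show t ∈ Icc (F s) (F x₁) from ⟨hlt.le, by linarith⟩)
        have hcmem : c ∈ F ⁻¹' Iic t := by simp [hFc']
        rw [hIic, mem_Iic] at hcmem
        have : c = s := le_antisymm hcmem hc.1
        rw [this] at hFc'
        linarith
      rw [hIic, hρ, hFst, sub_zero]

lemma stmt13_int_F : ∫ x, 2 * F x * (1 - F x) ∂ρ = 1/3 := by
  have hmap := stmt13_map_F_eq hFc hF0 hρ
  have h1 : ∫ x, 2 * F x * (1 - F x) ∂ρ = ∫ t, 2 * t * (1 - t) ∂(ρ.map F) := by
    rw [integral_map hFc.measurable.aemeasurable]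
    exact (Continuous.aestronglyMeasurable (by continuity))
  rw [h1, hmap]
  have h2 : ∫ t in Icc (0:ℝ) 1, 2 * t * (1 - t) = ∫ t in (0:ℝ)..1, 2 * t * (1 - t) := by
    rw [intervalIntegral.integral_of_le zero_le_one, ← integral_Icc_eq_integral_Ioc]
  rw [h2]
  have h3 : ∀ t : ℝ, 2 * t * (1 - t) = 2 * t - 2 * t^2 := by intro t; ring
  simp_rw [h3]
  rw [intervalIntegral.integral_sub (intervalIntegral.intervalIntegrable_id.const_mul 2)
    ((intervalIntegral.intervalIntegrable_pow 2).const_mul 2),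
    intervalIntegral.integral_const_mul, intervalIntegral.integral_const_mul,
    _root_.integral_id, _root_.integral_pow]
  norm_num

end cdf

/-- Indicator of `x` lying strictly between the min and (weakly below) max of a pair. -/
noncomputable def stmt13_ind (x : ℝ) (p : ℝ × ℝ) : ℝ :=
  if min p.1 p.2 < x ∧ x ≤ max p.1 p.2 then 1 else 0

lemma stmt13_ind_nonneg (x : ℝ) (p : ℝ × ℝ) : 0 ≤ stmt13_ind x p := by
  unfold stmt13_ind; split <;> norm_num

lemma stmt13_ind_le_one (x : ℝ) (p : ℝ × ℝ) : ‖stmt13_ind x p‖ ≤ 1 := by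
  unfold stmt13_ind; split <;> simp

lemma stmt13_measurable_ind : Measurable (fun q : ℝ × (ℝ × ℝ) => stmt13_ind q.1 q.2) := by
  unfold stmt13_ind
  refine Measurable.ite ?_ measurable_const measurable_const
  exact (measurableSet_lt (measurable_snd.fst.min measurable_snd.snd) measurable_fst).inter
    (measurableSet_le measurable_fst (measurable_snd.fst.max measurable_snd.snd))

lemma stmt13_ind_set_eq (x : ℝ) :
    {p : ℝ × ℝ | min p.1 p.2 < x ∧ x ≤ max p.1 p.2}
      = (Iio x ×ˢ Ici x) ∪ (Ici x ×ˢ Iio x) := by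
  ext p
  simp only [mem_setOf_eq, mem_union, mem_prod, mem_Iio, mem_Ici]
  constructor
  · rintro ⟨h1, h2⟩
    rcases le_total p.1 p.2 with h | h
    · left; rw [min_eq_left h] at h1; rw [max_eq_right h] at h2; exact ⟨h1, h2⟩
    · right; rw [min_eq_right h] at h1; rw [max_eq_left h] at h2; exact ⟨h2, h1⟩
  · rintro (⟨h1, h2⟩ | ⟨h1, h2⟩)
    · exact ⟨lt_of_le_of_lt (min_le_left _ _) h1, le_trans h2 (le_max_right _ _)⟩
    · exact ⟨lt_of_le_of_lt (min_le_right _ _) h2, le_trans h1 (le_max_left _ _)⟩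

variable {μ ν : Measure ℝ} [IsProbabilityMeasure μ] [IsProbabilityMeasure ν]

lemma stmt13_prod_btw (hFc : Continuous F) (hF0 : ∀ x, 0 ≤ F x)
    (hμ : ∀ x, μ (Iic x) = ENNReal.ofReal (F x))
    (hν : ∀ x, ν (Iic x) = ENNReal.ofReal (F x)) (x : ℝ) :
    (μ.prod ν) {p : ℝ × ℝ | min p.1 p.2 < x ∧ x ≤ max p.1 p.2}
      = ENNReal.ofReal (2 * F x * (1 - F x)) := by
  have hF1 := stmt13_F_le_one hF0 hμ
  rw [stmt13_ind_set_eq, measure_union ?hd ((measurableSet_Ici).prod measurableSet_Iio),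
    Measure.prod_prod, Measure.prod_prod, stmt13_Iio hFc hF0 hμ, stmt13_Ici hFc hF0 hμ,
    stmt13_Iio hFc hF0 hν, stmt13_Ici hFc hF0 hν,
    ← ENNReal.ofReal_mul (hF0 x), ← ENNReal.ofReal_mul (by linarith [hF1 x]),
    ← ENNReal.ofReal_add (by nlinarith [hF0 x, hF1 x]) (by nlinarith [hF0 x, hF1 x])]
  · ring_nf
  case hd =>
    rw [Set.disjoint_left]
    rintro p ⟨h1, _⟩ ⟨h2, _⟩
    exact absurd (show p.1 < x from h1) (not_lt.mpr h2)

lemma stmt13_integral_ind (hFc : Continuous F) (hF0 : ∀ x, 0 ≤ F x)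
    (hμ : ∀ x, μ (Iic x) = ENNReal.ofReal (F x))
    (hν : ∀ x, ν (Iic x) = ENNReal.ofReal (F x)) (x : ℝ) :
    ∫ p, stmt13_ind x p ∂(μ.prod ν) = 2 * F x * (1 - F x) := by
  have hF1 := stmt13_F_le_one hF0 hμ
  have hset : MeasurableSet {p : ℝ × ℝ | min p.1 p.2 < x ∧ x ≤ max p.1 p.2} := by
    rw [stmt13_ind_set_eq]
    exact (measurableSet_Iio.prod measurableSet_Ici).union
      (measurableSet_Ici.prod measurableSet_Iio)
  have h : ∀ p, stmt13_ind x p = Set.indicator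
      {p : ℝ × ℝ | min p.1 p.2 < x ∧ x ≤ max p.1 p.2} (fun _ => (1:ℝ)) p := by
    intro p; rw [indicator_apply]; rfl
  rw [funext h, integral_indicator_const _ hset, measureReal_def,
    stmt13_prod_btw hFc hF0 hμ hν, smul_eq_mul, mul_one,
    ENNReal.toReal_ofReal (by nlinarith [hF0 x, hF1 x])]

lemma stmt13_integral_ind_triple {κ : Measure ℝ} [IsProbabilityMeasure κ]
    (hFc : Continuous F) (hF0 : ∀ x, 0 ≤ F x)
    (hκ : ∀ x, κ (Iic x) = ENNReal.ofReal (F x))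
    (hμ : ∀ x, μ (Iic x) = ENNReal.ofReal (F x))
    (hν : ∀ x, ν (Iic x) = ENNReal.ofReal (F x)) :
    ∫ q : ℝ × (ℝ × ℝ), stmt13_ind q.1 q.2 ∂(κ.prod (μ.prod ν)) = 1/3 := by
  have hint : Integrable (fun q : ℝ × (ℝ × ℝ) => stmt13_ind q.1 q.2) (κ.prod (μ.prod ν)) := by
    refine Integrable.mono' (integrable_const 1) stmt13_measurable_ind.aestronglyMeasurable ?_
    exact Filter.Eventually.of_forall fun q => stmt13_ind_le_one _ _
  rw [integral_prod _ hint]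
  have h : ∀ c, ∫ p, stmt13_ind c p ∂(μ.prod ν) = 2 * F c * (1 - F c) :=
    fun c => stmt13_integral_ind hFc hF0 hμ hν c
  simp_rw [h]
  exact stmt13_int_F hFc hF0 hκ

/-- Pointwise identity: absolute rank difference equals the number of sample points
between the two values. -/
lemma stmt13_abs_diff {ι : Type*} (s : Finset ι) (v : ι → ℝ) (a b : ℝ) :
    |(∑ j ∈ s, if v j ≤ a then (1:ℝ) else 0) - ∑ j ∈ s, if v j ≤ b then (1:ℝ) else 0|
      = ∑ j ∈ s, stmt13_ind (v j) (a, b) := by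
  rw [← Finset.sum_sub_distrib]
  rcases le_total b a with h | h
  · have hterm : ∀ j, ((if v j ≤ a then (1:ℝ) else 0) - if v j ≤ b then (1:ℝ) else 0)
        = stmt13_ind (v j) (a, b) := by
      intro j
      unfold stmt13_ind
      simp only [min_eq_right h, max_eq_left h]
      rcases le_or_gt (v j) b with hb | hb
      · rw [if_pos (le_trans hb h), if_pos hb,
          if_neg (fun hc => absurd hc.1 (not_lt.mpr hb))]
        norm_num
      · rcases le_or_gt (v j) a with ha | ha
        · rw [if_pos ha, if_neg (not_le.mpr hb), if_pos ⟨hb, ha⟩]; norm_num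
        · rw [if_neg (not_le.mpr ha), if_neg (not_le.mpr hb),
            if_neg (fun hc => absurd hc.2 (not_le.mpr ha))]
          norm_num
    rw [Finset.sum_congr rfl (fun j _ => hterm j)]
    exact abs_of_nonneg (Finset.sum_nonneg fun j _ => stmt13_ind_nonneg _ _)
  · have hterm : ∀ j, ((if v j ≤ a then (1:ℝ) else 0) - if v j ≤ b then (1:ℝ) else 0)
        = -stmt13_ind (v j) (a, b) := by
      intro j
      unfold stmt13_ind
      simp only [min_eq_left h, max_eq_right h]
      rcases le_or_gt (v j) a with ha | ha
      · rw [if_pos ha, if_pos (ha.trans h),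
          if_neg (fun hc => absurd hc.1 (not_lt.mpr ha))]
        norm_num
      · rcases le_or_gt (v j) b with hb | hb
        · rw [if_neg (not_le.mpr ha), if_pos hb, if_pos ⟨ha, hb⟩]; norm_num
        · rw [if_neg (not_le.mpr ha), if_neg (not_le.mpr hb),
            if_neg (fun hc => absurd hc.2 (not_le.mpr hb))]
          norm_num
    rw [Finset.sum_congr rfl (fun j _ => hterm j), Finset.sum_neg_distrib, abs_neg]
    exact abs_of_nonneg (Finset.sum_nonneg fun j _ => stmt13_ind_nonneg _ _)

lemma stmt13_ind_self_pair {a b : ℝ} (h : a ≠ b) :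
    stmt13_ind a (a, b) + stmt13_ind b (a, b) = 1 := by
  unfold stmt13_ind
  rcases lt_or_gt_of_ne h with h' | h'
  · simp only [min_eq_left h'.le, max_eq_right h'.le]
    rw [if_neg (fun hc => lt_irrefl _ hc.1), if_pos ⟨h', le_rfl⟩]
    norm_num
  · simp only [min_eq_right h'.le, max_eq_left h'.le]
    rw [if_pos ⟨h', le_rfl⟩, if_neg (fun hc => lt_irrefl _ hc.1)]
    norm_num

end Aux

/-- Let `X 0, …, X (N-1)` be i.i.d. with continuous cdf `F` and
let `R i ω = N · H_N(X i ω) = #{j : X j ω ≤ X i ω}` be the natural rank of `X i`.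
Then, almost surely, for distinct indices `i₁, i₂, i₃, i₄`,
`E[|R₃ - R₄| ∣ X₁, X₂] = (N-1)/3 + 2F(X₁)(1 - F(X₁)) + 2F(X₂)(1 - F(X₂))`. -/
theorem stmt13
    {Ω : Type*} [MeasurableSpace Ω] (P : Measure Ω) [IsProbabilityMeasure P]
    (N : ℕ) (hN : 4 ≤ N)
    (X : Fin N → Ω → ℝ) (hmeas : ∀ i, Measurable (X i))
    (hIndep : iIndepFun X P)
    (F : ℝ → ℝ) (hFcont : Continuous F)
    (hF : ∀ i x, (P {ω | X i ω ≤ x}).toReal = F x)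
    (i₁ i₂ i₃ i₄ : Fin N)
    (hij : i₁ ≠ i₂ ∧ i₁ ≠ i₃ ∧ i₁ ≠ i₄ ∧ i₂ ≠ i₃ ∧ i₂ ≠ i₄ ∧ i₃ ≠ i₄)
    (R : Fin N → Ω → ℝ)
    (hR : ∀ i ω, R i ω = ∑ j, if X j ω ≤ X i ω then (1:ℝ) else 0) :
    P[(fun ω => |R i₃ ω - R i₄ ω|) |
        MeasurableSpace.comap (fun ω => (X i₁ ω, X i₂ ω)) inferInstance]
      =ᵐ[P] fun ω => ((N : ℝ) - 1) / 3
        + 2 * F (X i₁ ω) * (1 - F (X i₁ ω)) + 2 * F (X i₂ ω) * (1 - F (X i₂ ω)) := by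
  classical
  obtain ⟨h12, h13, h14, h23, h24, h34⟩ := hij
  have hT : Measurable (fun ω => (X i₁ ω, X i₂ ω)) := (hmeas i₁).prodMk (hmeas i₂)
  have hm : MeasurableSpace.comap (fun ω => (X i₁ ω, X i₂ ω)) inferInstance
      ≤ ‹MeasurableSpace Ω› := hT.comap_le
  have hF0 : ∀ x, 0 ≤ F x := fun x => by rw [← hF i₁ x]; exact ENNReal.toReal_nonneg
  have hρIic : ∀ i x, (P.map (X i)) (Set.Iic x) = ENNReal.ofReal (F x) := by
    intro i x
    rw [Measure.map_apply (hmeas i) measurableSet_Iic, ← hF i x,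
      ENNReal.ofReal_toReal (measure_ne_top _ _)]
    rfl
  have inst : ∀ i, IsProbabilityMeasure (P.map (X i)) :=
    fun i => Measure.isProbabilityMeasure_map (hmeas i).aemeasurable
  set A : Fin N → Ω → ℝ := fun j ω => stmt13_ind (X j ω) (X i₃ ω, X i₄ ω) with hA_def
  set s4 : Finset (Fin N) := {i₁, i₂, i₃, i₄} with hs4_def
  set sO : Finset (Fin N) := Finset.univ \ s4 with hsO_def
  have hAmeas : ∀ j, Measurable (A j) := fun j =>
    stmt13_measurable_ind.comp ((hmeas j).prodMk ((hmeas i₃).prodMk (hmeas i₄)))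
  have hAint : ∀ j, Integrable (A j) P := fun j =>
    Integrable.mono' (integrable_const 1) (hAmeas j).aestronglyMeasurable
      (Filter.Eventually.of_forall fun ω => stmt13_ind_le_one _ _)
  have htot : (fun ω => |R i₃ ω - R i₄ ω|)
      = A i₁ + A i₂ + (fun ω => A i₃ ω + A i₄ ω) + (fun ω => ∑ j ∈ sO, A j ω) := by
    funext ω
    rw [hR, hR, stmt13_abs_diff]
    have hsplit : ∑ j, A j ω = (∑ j ∈ sO, A j ω) + ∑ j ∈ s4, A j ω :=
      (Finset.sum_sdiff (Finset.subset_univ s4)).symm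
    have hs4sum : ∑ j ∈ s4, A j ω = A i₁ ω + A i₂ ω + A i₃ ω + A i₄ ω := by
      rw [hs4_def, Finset.sum_insert (by simp [h12, h13, h14]),
        Finset.sum_insert (by simp [h23, h24]), Finset.sum_insert (by simp [h34]),
        Finset.sum_singleton]
      ring
    simp only [Pi.add_apply]
    rw [hsplit, hs4sum]
    ring
  -- independence facts
  have hIndTY : IndepFun (fun ω => (X i₁ ω, X i₂ ω)) (fun ω => (X i₃ ω, X i₄ ω)) P :=
    hIndep.indepFun_prodMk_prodMk hmeas i₁ i₂ i₃ i₄ h13 h14 h23 h24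
  have hmap34 : P.map (fun ω => (X i₃ ω, X i₄ ω)) = (P.map (X i₃)).prod (P.map (X i₄)) :=
    (indepFun_iff_map_prod_eq_prod_map_map (hmeas i₃).aemeasurable
      (hmeas i₄).aemeasurable).mp (hIndep.indepFun h34)
  haveI := inst i₃; haveI := inst i₄
  -- piece 1
  have hA1 : P[A i₁ | MeasurableSpace.comap (fun ω => (X i₁ ω, X i₂ ω)) inferInstance] =ᵐ[P] fun ω => 2 * F (X i₁ ω) * (1 - F (X i₁ ω)) := by
    have h := stmt13_freeze P hT ((hmeas i₃).prodMk (hmeas i₄)) hIndTY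
      (f := fun q : (ℝ × ℝ) × (ℝ × ℝ) => stmt13_ind q.1.1 q.2)
      (stmt13_measurable_ind.comp (measurable_fst.fst.prodMk measurable_snd))
      (fun p => stmt13_ind_le_one _ _)
    refine h.trans (Filter.Eventually.of_forall fun ω => ?_)
    rw [hmap34]
    exact stmt13_integral_ind hFcont hF0 (hρIic i₃) (hρIic i₄) _
  -- piece 2
  have hA2 : P[A i₂ | MeasurableSpace.comap (fun ω => (X i₁ ω, X i₂ ω)) inferInstance] =ᵐ[P] fun ω => 2 * F (X i₂ ω) * (1 - F (X i₂ ω)) := by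
    have h := stmt13_freeze P hT ((hmeas i₃).prodMk (hmeas i₄)) hIndTY
      (f := fun q : (ℝ × ℝ) × (ℝ × ℝ) => stmt13_ind q.1.2 q.2)
      (stmt13_measurable_ind.comp (measurable_fst.snd.prodMk measurable_snd))
      (fun p => stmt13_ind_le_one _ _)
    refine h.trans (Filter.Eventually.of_forall fun ω => ?_)
    rw [hmap34]
    exact stmt13_integral_ind hFcont hF0 (hρIic i₃) (hρIic i₄) _
  -- piece 3+4
  have hne34 : ∀ᵐ ω ∂P, X i₃ ω ≠ X i₄ ω := by
    have hdiag : MeasurableSet {p : ℝ × ℝ | p.1 = p.2} :=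
      measurableSet_eq_fun measurable_fst measurable_snd
    have hz : P {ω | X i₃ ω = X i₄ ω} = 0 := by
      have hmp : P {ω | X i₃ ω = X i₄ ω}
          = (P.map (fun ω => (X i₃ ω, X i₄ ω))) {p : ℝ × ℝ | p.1 = p.2} := by
        rw [Measure.map_apply ((hmeas i₃).prodMk (hmeas i₄)) hdiag]
        rfl
      rw [hmp, hmap34, Measure.prod_apply hdiag]
      have hsl : ∀ a : ℝ, (P.map (X i₄)) (Prod.mk a ⁻¹' {p : ℝ × ℝ | p.1 = p.2}) = 0 := by
        intro a
        have he : Prod.mk a ⁻¹' {p : ℝ × ℝ | p.1 = p.2} = {a} := by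
          ext b; simp [eq_comm]
        rw [he]
        exact stmt13_atom hFcont hF0 (hρIic i₄) a
      simp_rw [hsl]
      simp
    rw [ae_iff]
    simpa only [not_not] using hz
  have hA34 : P[(fun ω => A i₃ ω + A i₄ ω) | MeasurableSpace.comap (fun ω => (X i₁ ω, X i₂ ω)) inferInstance] =ᵐ[P] fun _ => (1:ℝ) := by
    have hcongr : (fun ω => A i₃ ω + A i₄ ω) =ᵐ[P] fun _ => (1:ℝ) := by
      filter_upwards [hne34] with ω hω
      exact stmt13_ind_self_pair hω
    refine (condExp_congr_ae hcongr).trans ?_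
    rw [condExp_const hm]
  -- pieces for j outside
  have hAj : ∀ j ∈ sO, P[A j | MeasurableSpace.comap (fun ω => (X i₁ ω, X i₂ ω)) inferInstance] =ᵐ[P] fun _ => (1/3 : ℝ) := by
    intro j hj
    have hjnot : j ∉ s4 := (Finset.mem_sdiff.mp hj).2
    rw [hs4_def] at hjnot
    simp only [Finset.mem_insert, Finset.mem_singleton, not_or] at hjnot
    obtain ⟨hj1, hj2, hj3, hj4⟩ := hjnot
    haveI := inst j
    have hY : Measurable (fun ω => (X j ω, (X i₃ ω, X i₄ ω))) :=
      (hmeas j).prodMk ((hmeas i₃).prodMk (hmeas i₄))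
    have hTY : IndepFun (fun ω => (X i₁ ω, X i₂ ω))
        (fun ω => (X j ω, (X i₃ ω, X i₄ ω))) P := by
      have hdisj : Disjoint ({i₁, i₂} : Finset (Fin N)) ({j, i₃, i₄} : Finset (Fin N)) := by
        rw [Finset.disjoint_left]
        intro a ha hb
        simp only [Finset.mem_insert, Finset.mem_singleton] at ha hb
        rcases ha with rfl | rfl <;> rcases hb with rfl | rfl | rfl <;> simp_all
      have h := hIndep.indepFun_finset {i₁, i₂} {j, i₃, i₄} hdisj hmeas
      exact h.comp
        (show Measurable (fun v : (({i₁, i₂} : Finset (Fin N)) : Type _) → ℝ =>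
            (v ⟨i₁, by simp⟩, v ⟨i₂, by simp⟩)) from
          (measurable_pi_apply _).prodMk (measurable_pi_apply _))
        (show Measurable (fun v : (({j, i₃, i₄} : Finset (Fin N)) : Type _) → ℝ =>
            (v ⟨j, by simp⟩, (v ⟨i₃, by simp⟩, v ⟨i₄, by simp⟩))) from
          (measurable_pi_apply _).prodMk
            ((measurable_pi_apply _).prodMk (measurable_pi_apply _)))
    have h := stmt13_freeze P hT hY hTY
      (f := fun q : (ℝ × ℝ) × (ℝ × (ℝ × ℝ)) => stmt13_ind q.2.1 q.2.2)
      (stmt13_measurable_ind.comp measurable_snd)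
      (fun p => stmt13_ind_le_one _ _)
    refine h.trans (Filter.Eventually.of_forall fun ω => ?_)
    have hmapY : P.map (fun ω => (X j ω, (X i₃ ω, X i₄ ω)))
        = (P.map (X j)).prod (P.map (fun ω => (X i₃ ω, X i₄ ω))) :=
      (indepFun_iff_map_prod_eq_prod_map_map (hmeas j).aemeasurable
        ((hmeas i₃).prodMk (hmeas i₄)).aemeasurable).mp
        ((hIndep.indepFun_prodMk hmeas i₃ i₄ j (Ne.symm hj3) (Ne.symm hj4)).symm)
    rw [hmapY, hmap34]
    exact stmt13_integral_ind_triple hFcont hF0 (hρIic j) (hρIic i₃) (hρIic i₄)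
  -- sum over sO
  have hcard : (sO.card : ℝ) = (N : ℝ) - 4 := by
    have h4 : s4.card = 4 := by
      rw [hs4_def, Finset.card_insert_of_notMem (by simp [h12, h13, h14]),
        Finset.card_insert_of_notMem (by simp [h23, h24]),
        Finset.card_insert_of_notMem (by simp [h34]), Finset.card_singleton]
    rw [hsO_def, Finset.card_sdiff_of_subset (Finset.subset_univ _), Finset.card_univ,
      Fintype.card_fin, h4, Nat.cast_sub hN]
    norm_num
  have hSsum : P[(fun ω => ∑ j ∈ sO, A j ω) | MeasurableSpace.comap (fun ω => (X i₁ ω, X i₂ ω)) inferInstance] =ᵐ[P] fun _ => ((N:ℝ) - 4)/3 := by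
    have h0 : (fun ω => ∑ j ∈ sO, A j ω) = ∑ j ∈ sO, A j := by
      funext ω; rw [Finset.sum_apply]
    rw [h0]
    refine (condExp_finset_sum (fun j _ => hAint j) _).trans ?_
    have h2 : ∀ᵐ ω ∂P, ∀ j ∈ sO, (P[A j | MeasurableSpace.comap (fun ω => (X i₁ ω, X i₂ ω)) inferInstance]) ω = 1/3 :=
      (Filter.eventually_all_finset sO).mpr hAj
    filter_upwards [h2] with ω hω
    rw [Finset.sum_apply, Finset.sum_congr rfl hω, Finset.sum_const, nsmul_eq_mul, hcard]
    ring
  -- assemble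
  have hint1 := hAint i₁
  have hint2 := hAint i₂
  have hint3 : Integrable (fun ω => A i₃ ω + A i₄ ω) P := (hAint i₃).add (hAint i₄)
  have hint4 : Integrable (fun ω => ∑ j ∈ sO, A j ω) P :=
    integrable_finset_sum _ (fun j _ => hAint j)
  rw [htot]
  calc P[A i₁ + A i₂ + (fun ω => A i₃ ω + A i₄ ω) + (fun ω => ∑ j ∈ sO, A j ω) | MeasurableSpace.comap (fun ω => (X i₁ ω, X i₂ ω)) inferInstance]
      =ᵐ[P] P[A i₁ + A i₂ + (fun ω => A i₃ ω + A i₄ ω) | MeasurableSpace.comap (fun ω => (X i₁ ω, X i₂ ω)) inferInstance]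
          + P[(fun ω => ∑ j ∈ sO, A j ω) | MeasurableSpace.comap (fun ω => (X i₁ ω, X i₂ ω)) inferInstance] :=
        condExp_add ((hint1.add hint2).add hint3) hint4 _
    _ =ᵐ[P] (P[A i₁ + A i₂ | MeasurableSpace.comap (fun ω => (X i₁ ω, X i₂ ω)) inferInstance] + P[(fun ω => A i₃ ω + A i₄ ω) | MeasurableSpace.comap (fun ω => (X i₁ ω, X i₂ ω)) inferInstance])
          + P[(fun ω => ∑ j ∈ sO, A j ω) | MeasurableSpace.comap (fun ω => (X i₁ ω, X i₂ ω)) inferInstance] :=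
        (condExp_add (hint1.add hint2) hint3 _).add Filter.EventuallyEq.rfl
    _ =ᵐ[P] ((P[A i₁ | MeasurableSpace.comap (fun ω => (X i₁ ω, X i₂ ω)) inferInstance] + P[A i₂ | MeasurableSpace.comap (fun ω => (X i₁ ω, X i₂ ω)) inferInstance]) + P[(fun ω => A i₃ ω + A i₄ ω) | MeasurableSpace.comap (fun ω => (X i₁ ω, X i₂ ω)) inferInstance])
          + P[(fun ω => ∑ j ∈ sO, A j ω) | MeasurableSpace.comap (fun ω => (X i₁ ω, X i₂ ω)) inferInstance] :=
        ((condExp_add hint1 hint2 _).add Filter.EventuallyEq.rfl).add Filter.EventuallyEq.rfl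
    _ =ᵐ[P] fun ω => ((N : ℝ) - 1) / 3
          + 2 * F (X i₁ ω) * (1 - F (X i₁ ω)) + 2 * F (X i₂ ω) * (1 - F (X i₂ ω)) := by
        filter_upwards [hA1, hA2, hA34, hSsum] with ω e1 e2 e3 e4
        simp only [Pi.add_apply]
        rw [e1, e2, e3, e4]
        ring
end

section
/- Let h(u,v) = |u − v| + u(1 − u) + v(1 − v) − 2/3 for u, v ∈ [0,1]. Then for every positive integer k and every u ∈ [0,1], ∫_0^1 h(u,v)·cos(kπv) dv = −(2/(π²k²))·cos(kπu). That is, the functions v ↦ cos(kπv) are eigenfunctions of the integral operator with kernel h on L²[0,1], with corresponding eigenvalues λ_k = −2/(π²k²). -/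
open MeasureTheory

lemma quad_cos_hasDerivAt (a α β γ : ℝ) (ha : a ≠ 0) (v : ℝ) :
    HasDerivAt (fun v : ℝ =>
        (α + β * v + γ * v ^ 2) * Real.sin (a * v) / a
          + (β + 2 * γ * v) * Real.cos (a * v) / a ^ 2
          - 2 * γ * Real.sin (a * v) / a ^ 3)
      ((α + β * v + γ * v ^ 2) * Real.cos (a * v)) v := by
  have hav : HasDerivAt (fun v : ℝ => a * v) a v := by
    simpa using (hasDerivAt_id v).const_mul a
  have hsin : HasDerivAt (fun v : ℝ => Real.sin (a * v)) (Real.cos (a * v) * a) v :=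
    (Real.hasDerivAt_sin (a * v)).comp v hav
  have hcos : HasDerivAt (fun v : ℝ => Real.cos (a * v)) (-Real.sin (a * v) * a) v :=
    (Real.hasDerivAt_cos (a * v)).comp v hav
  have hq : HasDerivAt (fun v : ℝ => α + β * v + γ * v ^ 2) (β + 2 * γ * v) v := by
    have := (((hasDerivAt_pow 2 v).const_mul γ).const_add (α + β * v))
    have h1 : HasDerivAt (fun v : ℝ => β * v) β v := by
      simpa using (hasDerivAt_id v).const_mul β
    have h2 : HasDerivAt (fun v : ℝ => γ * v ^ 2) (γ * (2 * v)) v := by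
      simpa using (hasDerivAt_pow 2 v).const_mul γ
    have := ((h1.const_add α).add h2)
    exact this.congr_deriv (by ring)
  have hq' : HasDerivAt (fun v : ℝ => β + 2 * γ * v) (2 * γ) v := by
    simpa using (hasDerivAt_id v).const_mul (2 * γ) |>.const_add β
  have h1 := (hq.mul hsin).div_const a
  have h2 := (hq'.mul hcos).div_const (a ^ 2)
  have h3 := hsin.const_mul (2 * γ) |>.div_const (a ^ 3)
  have := (h1.add h2).sub h3
  refine this.congr_deriv ?_
  field_simp
  ring

lemma quad_cos_integral (a α β γ s t : ℝ) (ha : a ≠ 0) :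
    ∫ v in s..t, (α + β * v + γ * v ^ 2) * Real.cos (a * v)
      = ((α + β * t + γ * t ^ 2) * Real.sin (a * t) / a
          + (β + 2 * γ * t) * Real.cos (a * t) / a ^ 2
          - 2 * γ * Real.sin (a * t) / a ^ 3)
        - ((α + β * s + γ * s ^ 2) * Real.sin (a * s) / a
          + (β + 2 * γ * s) * Real.cos (a * s) / a ^ 2
          - 2 * γ * Real.sin (a * s) / a ^ 3) := by
  refine intervalIntegral.integral_eq_sub_of_hasDerivAt
    (fun v _ => quad_cos_hasDerivAt a α β γ ha v) ?_
  apply Continuous.intervalIntegrable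
  fun_prop

/-- For the kernel `h(u,v) = |u-v| + u(1-u) + v(1-v) - 2/3`,
the functions `v ↦ cos(kπv)`, `k ≥ 1`, are eigenfunctions of the integral
operator with kernel `h` on `L²[0,1]`, with eigenvalues `λ_k = -2/(π²k²)`:
`∫₀¹ h(u,v) cos(kπv) dv = -(2/(π²k²)) cos(kπu)` for every `u ∈ [0,1]`. -/
theorem stmt15 (k : ℕ) (hk : 0 < k) (u : ℝ) (hu : u ∈ Set.Icc (0:ℝ) 1) :
    ∫ v in (0:ℝ)..1,
        (|u - v| + u * (1 - u) + v * (1 - v) - 2/3) * Real.cos (k * Real.pi * v)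
      = -(2 / (Real.pi ^ 2 * (k : ℝ) ^ 2)) * Real.cos (k * Real.pi * u) := by
  obtain ⟨hu0, hu1⟩ := hu
  set a : ℝ := k * Real.pi with ha_def
  have hk' : (k : ℝ) ≠ 0 := Nat.cast_ne_zero.mpr hk.ne'
  have ha : a ≠ 0 := mul_ne_zero hk' Real.pi_ne_zero
  have hcont : Continuous (fun v : ℝ =>
      (|u - v| + u * (1 - u) + v * (1 - v) - 2/3) * Real.cos (a * v)) := by
    fun_prop
  have hsplit :
      (∫ v in (0:ℝ)..u, (|u - v| + u * (1 - u) + v * (1 - v) - 2/3) * Real.cos (a * v))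
        + ∫ v in u..1, (|u - v| + u * (1 - u) + v * (1 - v) - 2/3) * Real.cos (a * v)
      = ∫ v in (0:ℝ)..1, (|u - v| + u * (1 - u) + v * (1 - v) - 2/3) * Real.cos (a * v) :=
    intervalIntegral.integral_add_adjacent_intervals
      (hcont.intervalIntegrable 0 u) (hcont.intervalIntegrable u 1)
  rw [← hsplit]
  have h1 : (∫ v in (0:ℝ)..u,
      (|u - v| + u * (1 - u) + v * (1 - v) - 2/3) * Real.cos (a * v))
      = ∫ v in (0:ℝ)..u,
        ((2*u - u^2 - 2/3) + 0 * v + (-1) * v ^ 2) * Real.cos (a * v) := by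
    apply intervalIntegral.integral_congr
    intro v hv
    rw [Set.uIcc_of_le hu0] at hv
    have : |u - v| = u - v := abs_of_nonneg (by linarith [hv.2])
    dsimp only; rw [this]; ring_nf
  have h2 : (∫ v in u..(1:ℝ),
      (|u - v| + u * (1 - u) + v * (1 - v) - 2/3) * Real.cos (a * v))
      = ∫ v in u..(1:ℝ),
        ((-u^2 - 2/3) + 2 * v + (-1) * v ^ 2) * Real.cos (a * v) := by
    apply intervalIntegral.integral_congr
    intro v hv
    rw [Set.uIcc_of_le hu1] at hv
    have : |u - v| = v - u := by
      rw [abs_sub_comm]; exact abs_of_nonneg (by linarith [hv.1])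
    dsimp only; rw [this]; ring_nf
  rw [h1, h2, quad_cos_integral a _ _ _ _ _ ha, quad_cos_integral a _ _ _ _ _ ha]
  have hsin1 : Real.sin (a * 1) = 0 := by
    rw [mul_one, ha_def]; exact Real.sin_nat_mul_pi k
  rw [hsin1]
  simp only [mul_zero, zero_mul, mul_one, Real.sin_zero, Real.cos_zero, zero_div]
  have hpi : Real.pi ≠ 0 := Real.pi_ne_zero
  field_simp [ha_def]
  ring
end
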